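/- Fix a ∈ α with a = τ(a). For any r-component nanophrase p and i < j, writing k = ⟨g_{i,j,a}, p⟩, the identity ⟨2e_{i,j,a,a} + 2f_{i,j,a,a}, p⟩ = k(k−1) holds, so ⟨2e_{i,j,a,a} + 2f_{i,j,a,a} + g_{i,j,a}, p⟩ ≡ k² (mod 4); in particular this degree-2 formula mod 4 equals 1 if k is odd and 0 if k is even, recovering the mod-2 linking number entry l_{ija}(p). -/

import Mathlib

open List

attribute [local instance] Classical.propDecidable

/-- A symbol in a nanophrase: either a separator `none` or a letter occurrence
`some (x, a)` where `x` is the letter's name and `a` its label in `α`. -/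
abbrev NSym (α : Type) := Option (ℕ × α)

/-- A phrase: list of symbols; `none` separates components. -/
abbrev NPhrase (α : Type) := List (NSym α)

/-- The list of letter occurrences of a phrase. -/
def occs {α : Type} (p : NPhrase α) : List (ℕ × α) := p.filterMap id

/-- The set of (names of) letters appearing in a phrase. -/
def lettersOf {α : Type} (p : NPhrase α) : Finset ℕ := ((occs p).map Prod.fst).toFinset

/-- The rank: number of distinct letters. -/
def rank {α : Type} (p : NPhrase α) : ℕ := (lettersOf p).card

/-- A nanophrase: each letter appears exactly twice, with a consistent label. -/
def IsNano {α : Type} (p : NPhrase α) : Prop :=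
  (∀ x ∈ lettersOf p, ((occs p).map Prod.fst).count x = 2) ∧
  (∀ x a b, (x, a) ∈ occs p → (x, b) ∈ occs p → a = b)

/-- The number of components of a phrase. -/
def comps {α : Type} (p : NPhrase α) : ℕ := p.countP (fun s => s.isNone) + 1

/-- The subphrase with letter set restricted to `T`. -/
def restrict {α : Type} (p : NPhrase α) (T : Finset ℕ) : NPhrase α :=
  p.filter (fun s => match s with | none => true | some (x, _) => decide (x ∈ T))

/-- Isomorphism of (nano)phrases: a renaming of letters preserving labels. -/
def Iso {α : Type} (p q : NPhrase α) : Prop :=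
  ∃ σ : ℕ ≃ ℕ, p.map (Option.map (fun xa => (σ xa.1, xa.2))) = q

/-- Angle bracket: the number of subphrases of `p` isomorphic to `q`. -/
noncomputable def bracketN {α : Type} (q p : NPhrase α) : ℕ :=
  ((lettersOf p).powerset.filter (fun T => Iso (restrict p T) q)).card

/-- Homotopy moves for homotopy data `(α, τ, S)`. -/
inductive HMove {α : Type} (τ : α → α) (S : Set (α × α × α)) : NPhrase α → NPhrase α → Prop
  | h1 (x y : NPhrase α) (i : ℕ) (a : α) :
      HMove τ S (x ++ [some (i,a), some (i,a)] ++ y) (x ++ y)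
  | h2 (x y z : NPhrase α) (i j : ℕ) (a b : α) (h : a = τ b) :
      HMove τ S (x ++ [some (i,a), some (j,b)] ++ y ++ [some (j,b), some (i,a)] ++ z)
        (x ++ y ++ z)
  | h3 (x y z t : NPhrase α) (i j k : ℕ) (a b c : α) (h : (a,b,c) ∈ S) :
      HMove τ S
        (x ++ [some (i,a), some (j,b)] ++ y ++ [some (i,a), some (k,c)] ++ z
           ++ [some (j,b), some (k,c)] ++ t)
        (x ++ [some (j,b), some (i,a)] ++ y ++ [some (k,c), some (i,a)] ++ z
           ++ [some (k,c), some (j,b)] ++ t)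

/-- Homotopy: equivalence generated by isomorphism and the moves H1, H2, H3. -/
def Homotopic {α : Type} (τ : α → α) (S : Set (α × α × α)) : NPhrase α → NPhrase α → Prop :=
  Relation.EqvGen (fun p q => HMove τ S p q ∨ Iso p q)

/-- Build a phrase from a list of components. -/
def ofComponents {α : Type} (L : List (List (ℕ × α))) : NPhrase α :=
  ((L.map (fun c => c.map some)).intersperse [none]).flatten

/-- `g_{i,j,a}`: a single letter with one occurrence in component `i` and one in
component `j` (`i < j`), labeled `a`. -/
def gPat {α : Type} (r : ℕ) (i j : Fin r) (a : α) : NPhrase α :=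
  ofComponents (List.ofFn fun k : Fin r => if k = i ∨ k = j then [(0,a)] else [])

/-- `e_{i,j,a,b}`: component `i` is `AB` and component `j` is `AB`, `|A|=a`, `|B|=b`. -/
def ePat {α : Type} (r : ℕ) (i j : Fin r) (a b : α) : NPhrase α :=
  ofComponents (List.ofFn fun k : Fin r =>
    if k = i then [(0,a),(1,b)] else if k = j then [(0,a),(1,b)] else [])

/-- `f_{i,j,a,b}`: component `i` is `AB` and component `j` is `BA`, `|A|=a`, `|B|=b`. -/
def fPat {α : Type} (r : ℕ) (i j : Fin r) (a b : α) : NPhrase α :=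
  ofComponents (List.ofFn fun k : Fin r =>
    if k = i then [(0,a),(1,b)] else if k = j then [(1,b),(0,a)] else [])


/-! A subphrase isomorphic to `g_{i,j,a}` is a single letter `x` of `p`, labelled `a`, occurring
once in component `i`, once in component `j` and nowhere else; call these the `g`-letters of `p`,
so that `k` is their number. Splitting phrases into components shows that a two-letter
subphrase on `{x, y}` is isomorphic to `e_{i,j,a,a}` or to `f_{i,j,a,a}` exactly when `x` and `y`
are both `g`-letters: the order of `x` and `y` in components `i` and `j` decides which of
`e_{x,y}`, `e_{y,x}`, `f_{x,y}`, `f_{y,x}` it is, and it is never isomorphic to both. Hence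
`⟨e, p⟩ + ⟨f, p⟩ = k.choose 2`, so `⟨2e + 2f, p⟩ = k(k-1)` and `⟨2e + 2f + g, p⟩ = k²`, which is
`1` or `0` modulo `4` according to the parity of `k`. -/

variable {α : Type}

theorem List.map_intersperse {β γ : Type*} (g : β → γ) (sep : β) (l : List β) :
    (l.intersperse sep).map g = (l.map g).intersperse (g sep) := by
  induction l with
  | nil => rfl
  | cons b l ih => cases l <;> simp_all

theorem ofComponents_cons (c : List (ℕ × α)) {L : List (List (ℕ × α))} (hL : L ≠ []) :
    ofComponents (c :: L) = c.map some ++ none :: ofComponents L :=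
  (List.intercalate_cons_of_ne_nil (ys := [none]) (by simpa using hL)).trans
    (by simp [ofComponents, List.intercalate])

theorem exists_ofComponents_eq (p : NPhrase α) : ∃ L, L ≠ [] ∧ ofComponents L = p := by
  induction p with
  | nil => exact ⟨[[]], by simp, rfl⟩
  | cons s p ih =>
    obtain ⟨L, hL, rfl⟩ := ih
    cases s with
    | none => exact ⟨[] :: L, by simp, by simp [ofComponents_cons _ hL]⟩
    | some xa =>
      obtain ⟨c, L, rfl⟩ := List.exists_cons_of_ne_nil hL
      refine ⟨(xa :: c) :: L, by simp, ?_⟩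
      cases L with
      | nil => simp [ofComponents]
      | cons l L =>
        rw [ofComponents_cons _ (List.cons_ne_nil l L), ofComponents_cons _ (List.cons_ne_nil l L)]
        simp

theorem ofComponents_injective {L M : List (List (ℕ × α))} (hL : L ≠ []) (hM : M ≠ [])
    (h : ofComponents L = ofComponents M) : L = M := by
  have splitOn_ofComponents (N : List (List (ℕ × α))) (hN : N ≠ []) :
      (ofComponents N).splitOn none = N.map (List.map some) :=
    List.splitOn_intercalate none
      (fun l hl => by obtain ⟨c, -, rfl⟩ := List.mem_map.mp hl; simp) (by simpa using hN)
  have h' := splitOn_ofComponents L hL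
  rw [h, splitOn_ofComponents M hM] at h'
  exact List.map_injective_iff.mpr (List.map_injective_iff.mpr (Option.some_injective _)) h'.symm

theorem restrict_ofComponents (L : List (List (ℕ × α))) (T : Finset ℕ) :
    restrict (ofComponents L) T = ofComponents (L.map (List.filter (·.1 ∈ T))) := by
  simp [restrict, ofComponents, List.filter_flatten, List.map_intersperse, List.filter_map,
    Function.comp_def]

theorem map_ofComponents (f : ℕ × α → ℕ × α) (L : List (List (ℕ × α))) :
    (ofComponents L).map (Option.map f) = ofComponents (L.map (List.map f)) := by
  simp [ofComponents, List.map_flatten, List.map_intersperse, Function.comp_def]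

theorem occs_ofComponents (L : List (List (ℕ × α))) : occs (ofComponents L) = L.flatten := by
  induction L with
  | nil => rfl
  | cons c L ih =>
    rcases eq_or_ne L [] with rfl | hL
    · simp [occs, ofComponents]
    · simp only [occs] at ih ⊢
      rw [ofComponents_cons _ hL]
      simpa [List.filterMap_append] using ih

theorem mem_lettersOf {p : NPhrase α} {x : ℕ} : x ∈ lettersOf p ↔ ∃ b, (x, b) ∈ occs p := by
  simp [lettersOf]

theorem occs_restrict (p : NPhrase α) (T : Finset ℕ) :
    occs (restrict p T) = (occs p).filter (·.1 ∈ T) := by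
  obtain ⟨L, -, rfl⟩ := exists_ofComponents_eq p
  rw [restrict_ofComponents, occs_ofComponents, occs_ofComponents, List.filter_flatten]

theorem lettersOf_restrict {p : NPhrase α} {T : Finset ℕ} (h : T ⊆ lettersOf p) :
    lettersOf (restrict p T) = T := by
  ext x
  simp only [mem_lettersOf, occs_restrict, List.mem_filter, decide_eq_true_eq]
  exact ⟨fun ⟨_, _, hx⟩ => hx, fun hx => (mem_lettersOf.mp (h hx)).imp fun _ hb => ⟨hb, hx⟩⟩

theorem restrict_restrict_of_subset (p : NPhrase α) {T U : Finset ℕ} (h : U ⊆ T) :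
    restrict (restrict p T) U = restrict p U := by
  simp only [restrict, List.filter_filter]
  congr 1
  funext s
  rcases s with _ | ⟨x, b⟩
  · rfl
  · simpa using fun hx => h hx

theorem Iso.exists_eq_map {s q : NPhrase α} (h : Iso s q) :
    ∃ σ : ℕ ≃ ℕ, s = q.map (Option.map fun xa => (σ xa.1, xa.2)) := by
  obtain ⟨σ, rfl⟩ := h
  exact ⟨σ.symm, by simp [Function.comp_def]⟩

theorem exists_equiv_apply_eq_zero_one {x y : ℕ} (hxy : x ≠ y) :
    ∃ σ : ℕ ≃ ℕ, σ x = 0 ∧ σ y = 1 := by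
  set τ := Equiv.swap x 0
  have hτy : τ y ≠ 0 := fun h => hxy (τ.injective (by simp [τ, h])).symm
  exact ⟨τ.trans (Equiv.swap (τ y) 1),
    by simp [τ, Equiv.swap_apply_of_ne_of_ne hτy.symm zero_ne_one], by simp⟩

theorem List.filter_mem_pair_perm {x y : ℕ} (hxy : x ≠ y) (l : List (ℕ × α)) :
    l.filter (·.1 ∈ ({x, y} : Finset ℕ))
      ~ l.filter (·.1 ∈ ({x} : Finset ℕ)) ++ l.filter (·.1 ∈ ({y} : Finset ℕ)) := by
  simp only [Finset.mem_insert, Finset.mem_singleton]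
  induction l with
  | nil => simp
  | cons b l ih =>
    by_cases hx : b.1 = x
    · simpa [List.filter_cons, hx, hxy] using ih
    · by_cases hy : b.1 = y
      · simpa [List.filter_cons, hx, hy, hxy.symm] using ih.cons b |>.trans List.perm_middle.symm
      · simpa [List.filter_cons, hx, hy] using ih

theorem List.filter_mem_singleton_of_perm_pair {a : α} {x y z : ℕ} (hxy : x ≠ y)
    (hz : z = x ∨ z = y) {u : List (ℕ × α)} (hu : u ~ [(x, a), (y, a)]) :
    u.filter (·.1 ∈ ({z} : Finset ℕ)) = [(z, a)] := by
  refine List.perm_singleton.mp ((hu.filter _).trans ?_)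
  rcases hz with rfl | rfl <;> simp [hxy, hxy.symm]

section TwoComponents

variable (r : ℕ) (i j : Fin r)

def ofTwoComponents (u v : List (ℕ × α)) : NPhrase α :=
  ofComponents (List.ofFn fun k : Fin r => if k = i then u else if k = j then v else [])

theorem gPat_eq_ofTwoComponents (a : α) :
    gPat r i j a = ofTwoComponents r i j [(0, a)] [(0, a)] := by
  simp only [gPat, ofTwoComponents]
  congr 2
  funext k
  split_ifs <;> simp_all

theorem ePat_eq_ofTwoComponents (a b : α) :
    ePat r i j a b = ofTwoComponents r i j [(0, a), (1, b)] [(0, a), (1, b)] := rfl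

theorem fPat_eq_ofTwoComponents (a b : α) :
    fPat r i j a b = ofTwoComponents r i j [(0, a), (1, b)] [(1, b), (0, a)] := rfl

variable {r i j}

theorem map_ofTwoComponents (f : ℕ × α → ℕ × α) (u v : List (ℕ × α)) :
    (ofTwoComponents r i j u v).map (Option.map f)
      = ofTwoComponents r i j (u.map f) (v.map f) := by
  simp only [ofTwoComponents, map_ofComponents, List.map_ofFn]
  congr 2
  funext k
  simp only [Function.comp_apply]
  split_ifs <;> rfl

theorem restrict_ofTwoComponents (u v : List (ℕ × α)) (T : Finset ℕ) :
    restrict (ofTwoComponents r i j u v) T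
      = ofTwoComponents r i j (u.filter (·.1 ∈ T)) (v.filter (·.1 ∈ T)) := by
  simp only [ofTwoComponents, restrict_ofComponents, List.map_ofFn]
  congr 2
  funext k
  simp only [Function.comp_apply]
  split_ifs <;> rfl

theorem lettersOf_ofTwoComponents (hij : i ≠ j) (u v : List (ℕ × α)) :
    lettersOf (ofTwoComponents r i j u v) = ((u ++ v).map Prod.fst).toFinset := by
  ext x
  simp only [mem_lettersOf, ofTwoComponents, occs_ofComponents, List.mem_flatten, List.mem_ofFn,
    List.mem_toFinset, List.mem_map, List.mem_append, Prod.exists, exists_and_right,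
    exists_eq_right]
  constructor
  · rintro ⟨b, _, ⟨k, rfl⟩, hb⟩
    split_ifs at hb
    exacts [⟨b, .inl hb⟩, ⟨b, .inr hb⟩, absurd hb List.not_mem_nil]
  · rintro ⟨b, hb | hb⟩
    · exact ⟨b, _, ⟨i, rfl⟩, by simpa using hb⟩
    · exact ⟨b, _, ⟨j, rfl⟩, by simpa [hij.symm] using hb⟩

theorem ofTwoComponents_injective (hij : i ≠ j) {u v u' v' : List (ℕ × α)}
    (h : ofTwoComponents r i j u v = ofTwoComponents r i j u' v') : u = u' ∧ v = v' := by
  have hr : r ≠ 0 := i.pos.ne'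
  have h' := List.ofFn_inj.mp (ofComponents_injective (by simpa [List.ofFn_eq_nil_iff] using hr)
    (by simpa [List.ofFn_eq_nil_iff] using hr) h)
  exact ⟨by simpa using congrFun h' i, by simpa [hij.symm] using congrFun h' j⟩

end TwoComponents

variable {r : ℕ} {i j : Fin r}

theorem iso_gPat_iff (s : NPhrase α) (a : α) :
    Iso s (gPat r i j a) ↔ ∃ x, s = ofTwoComponents r i j [(x, a)] [(x, a)] := by
  rw [gPat_eq_ofTwoComponents]
  constructor
  · intro h
    obtain ⟨σ, rfl⟩ := h.exists_eq_map
    exact ⟨σ 0, by simp [map_ofTwoComponents]⟩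
  · rintro ⟨x, rfl⟩
    exact ⟨Equiv.swap x 0, by simp [map_ofTwoComponents]⟩

/-- `s` is one of `e_{i,j,x,y}`, `e_{i,j,y,x}`, `f_{i,j,x,y}`, `f_{i,j,y,x}`, written with the
letters `x`, `y` (both labelled `a`) in place of `A`, `B`. -/
def IsEFPhrase (r : ℕ) (i j : Fin r) (a : α) (x y : ℕ) (s : NPhrase α) : Prop :=
  ∃ u v, u ~ [(x, a), (y, a)] ∧ v ~ [(x, a), (y, a)] ∧ s = ofTwoComponents r i j u v

theorem iso_ePat_or_iso_fPat_of_perm {a : α} {x y : ℕ} (hxy : x ≠ y) {v : List (ℕ × α)}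
    (hv : v ~ [(x, a), (y, a)]) :
    Iso (ofTwoComponents r i j [(x, a), (y, a)] v) (ePat r i j a a) ∨
      Iso (ofTwoComponents r i j [(x, a), (y, a)] v) (fPat r i j a a) := by
  obtain ⟨σ, hσx, hσy⟩ := exists_equiv_apply_eq_zero_one hxy
  rcases List.perm_pair.mp hv with rfl | rfl
  · exact .inl ⟨σ, by simp [map_ofTwoComponents, ePat_eq_ofTwoComponents, hσx, hσy]⟩
  · exact .inr ⟨σ, by simp [map_ofTwoComponents, fPat_eq_ofTwoComponents, hσx, hσy]⟩

theorem iso_ePat_or_iso_fPat_iff (s : NPhrase α) (a : α) :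
    Iso s (ePat r i j a a) ∨ Iso s (fPat r i j a a) ↔
      ∃ x y, x ≠ y ∧ IsEFPhrase r i j a x y s := by
  constructor
  · rintro (h | h) <;> obtain ⟨σ, rfl⟩ := h.exists_eq_map
    · exact ⟨σ 0, σ 1, by simp, _, _, .refl _, .refl _, by
        simp [ePat_eq_ofTwoComponents, map_ofTwoComponents]⟩
    · exact ⟨σ 0, σ 1, by simp, _, _, .refl _, .swap _ _ _, by
        simp [fPat_eq_ofTwoComponents, map_ofTwoComponents]⟩
  · rintro ⟨x, y, hxy, u, v, hu, hv, rfl⟩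
    rcases List.perm_pair.mp hu with rfl | rfl
    · exact iso_ePat_or_iso_fPat_of_perm hxy hv
    · exact iso_ePat_or_iso_fPat_of_perm hxy.symm (hv.trans (.swap _ _ _))

theorem not_iso_ePat_and_iso_fPat (hij : i ≠ j) (s : NPhrase α) (a : α) :
    ¬(Iso s (ePat r i j a a) ∧ Iso s (fPat r i j a a)) := by
  rintro ⟨he, hf⟩
  obtain ⟨σ, rfl⟩ := he.exists_eq_map
  obtain ⟨τ, h⟩ := hf.exists_eq_map
  simp only [ePat_eq_ofTwoComponents, fPat_eq_ofTwoComponents, map_ofTwoComponents] at h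
  obtain ⟨hu, hv⟩ := ofTwoComponents_injective hij h
  simp only [List.map_cons, List.map_nil, List.cons.injEq, Prod.mk.injEq] at hu hv
  exact zero_ne_one (σ.injective (hv.1.1.trans hu.2.1.1.symm))

noncomputable def gLetters (r : ℕ) (i j : Fin r) (a : α) (p : NPhrase α) : Finset ℕ :=
  (lettersOf p).filter fun x => restrict p {x} = ofTwoComponents r i j [(x, a)] [(x, a)]

theorem IsEFPhrase.subset_gLetters {a : α} {p : NPhrase α} {T : Finset ℕ} {x y : ℕ}
    (hij : i ≠ j) (hT : T ⊆ lettersOf p) (hxy : x ≠ y)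
    (h : IsEFPhrase r i j a x y (restrict p T)) :
    T = {x, y} ∧ T ⊆ gLetters r i j a p := by
  obtain ⟨u, v, hu, hv, hs⟩ := h
  have hTxy : T = {x, y} := by
    rw [← lettersOf_restrict hT, hs, lettersOf_ofTwoComponents hij]
    ext z
    simp [hu.mem_iff, hv.mem_iff, eq_comm]
  refine ⟨hTxy, fun z hz => Finset.mem_filter.mpr ⟨hT hz, ?_⟩⟩
  have hz' : z = x ∨ z = y := by simpa [hTxy] using hz
  rw [← restrict_restrict_of_subset p (Finset.singleton_subset_iff.mpr hz), hs,
    restrict_ofTwoComponents, List.filter_mem_singleton_of_perm_pair hxy hz' hu,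
    List.filter_mem_singleton_of_perm_pair hxy hz' hv]

theorem map_filter_eq_of_mem_gLetters {a : α} {L : List (List (ℕ × α))} (hL : L ≠ []) {x : ℕ}
    (hx : x ∈ gLetters r i j a (ofComponents L)) :
    L.map (List.filter (·.1 ∈ ({x} : Finset ℕ)))
      = List.ofFn fun k : Fin r => if k = i then [(x, a)] else if k = j then [(x, a)] else [] :=
  ofComponents_injective (by simpa using hL) (by simpa [List.ofFn_eq_nil_iff] using i.pos.ne')
    (by simpa [restrict_ofComponents, ofTwoComponents] using (Finset.mem_filter.mp hx).2)

theorem isEFPhrase_restrict_pair {a : α} {p : NPhrase α} {x y : ℕ} (hij : i ≠ j) (hxy : x ≠ y)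
    (hx : x ∈ gLetters r i j a p) (hy : y ∈ gLetters r i j a p) :
    IsEFPhrase r i j a x y (restrict p {x, y}) := by
  obtain ⟨L, hL, rfl⟩ := exists_ofComponents_eq p
  have hlen : L.length = r := by
    simpa using congrArg List.length (map_filter_eq_of_mem_gLetters hL hx)
  obtain ⟨c, rfl⟩ : ∃ c : Fin r → List (ℕ × α), L = List.ofFn c :=
    ⟨fun k => L[k], by subst hlen; exact List.ofFn_getElem.symm⟩
  have hc (z : ℕ) (hz : z ∈ gLetters r i j a (ofComponents (List.ofFn c))) (k : Fin r) :
      (c k).filter (·.1 ∈ ({z} : Finset ℕ))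
        = if k = i then [(z, a)] else if k = j then [(z, a)] else [] :=
    congrFun (List.ofFn_inj.mp (List.map_ofFn.symm.trans (map_filter_eq_of_mem_gLetters hL hz))) k
  have hperm (k : Fin r) := List.filter_mem_pair_perm hxy (c k)
  refine ⟨_, _, (hperm i).trans ?_, (hperm j).trans ?_, ?_⟩
  · rw [hc x hx i, hc y hy i]
    simp
  · rw [hc x hx j, hc y hy j]
    simp [hij.symm]
  · rw [restrict_ofComponents, List.map_ofFn, ofTwoComponents]
    congr 2
    funext k
    simp only [Function.comp_apply]
    split_ifs with hki hkj
    · rw [hki]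
    · rw [hkj]
    · exact ((hperm k).trans (by rw [hc x hx k, hc y hy k]; simp [hki, hkj])).eq_nil

theorem bracketN_gPat (hij : i ≠ j) (a : α) (p : NPhrase α) :
    bracketN (gPat r i j a) p = (gLetters r i j a p).card := by
  suffices h : (lettersOf p).powerset.filter (fun T => Iso (restrict p T) (gPat r i j a))
      = (gLetters r i j a p).powersetCard 1 by
    rw [bracketN, h, Finset.card_powersetCard, Nat.choose_one_right]
  ext T
  simp only [Finset.mem_filter, Finset.mem_powerset, Finset.mem_powersetCard, Finset.card_eq_one,
    iso_gPat_iff]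
  constructor
  · rintro ⟨hT, x, hx⟩
    obtain rfl : T = {x} := by
      rw [← lettersOf_restrict hT, hx, lettersOf_ofTwoComponents hij]
      simp
    exact ⟨Finset.singleton_subset_iff.mpr (Finset.mem_filter.mpr ⟨hT (by simp), hx⟩), x, rfl⟩
  · rintro ⟨hT, x, rfl⟩
    have hx := Finset.mem_filter.mp (hT (Finset.mem_singleton_self x))
    exact ⟨Finset.singleton_subset_iff.mpr hx.1, x, hx.2⟩

theorem bracketN_ePat_add_bracketN_fPat (hij : i ≠ j) (a : α) (p : NPhrase α) :
    bracketN (ePat r i j a a) p + bracketN (fPat r i j a a) p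
      = (gLetters r i j a p).card.choose 2 := by
  have hdisj := (Finset.disjoint_filter (s := (lettersOf p).powerset)).mpr fun T _ he hf =>
    not_iso_ePat_and_iso_fPat hij (restrict p T) a ⟨he, hf⟩
  suffices h : (lettersOf p).powerset.filter (fun T => Iso (restrict p T) (ePat r i j a a))
      ∪ (lettersOf p).powerset.filter (fun T => Iso (restrict p T) (fPat r i j a a))
      = (gLetters r i j a p).powersetCard 2 by
    rw [bracketN, bracketN, ← Finset.card_union_of_disjoint hdisj, h, Finset.card_powersetCard]
  ext T
  simp only [Finset.mem_union, Finset.mem_filter, Finset.mem_powerset, Finset.mem_powersetCard,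
    ← and_or_left, iso_ePat_or_iso_fPat_iff]
  constructor
  · rintro ⟨hT, x, y, hxy, h⟩
    obtain ⟨rfl, hsub⟩ := h.subset_gLetters hij hT hxy
    exact ⟨hsub, Finset.card_pair hxy⟩
  · rintro ⟨hsub, hcard⟩
    obtain ⟨x, y, hxy, rfl⟩ := Finset.card_eq_two.mp hcard
    exact ⟨hsub.trans (Finset.filter_subset _ _), x, y, hxy,
      isEFPhrase_restrict_pair hij hxy (hsub (by simp)) (hsub (by simp))⟩

theorem Nat.two_mul_choose_two (n : ℕ) : 2 * n.choose 2 = n * (n - 1) := by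
  rw [Nat.choose_two_right, Nat.mul_div_cancel' (Nat.even_mul_pred_self n).two_dvd]

theorem ZMod.natCast_sq_mod_four (k : ℕ) :
    (k : ZMod 4) ^ 2 = if k % 2 = 1 then 1 else 0 := by
  rw [← ZMod.natCast_mod k 4, ← Nat.mod_mod_of_dvd k (by norm_num : 2 ∣ 4)]
  have h := Nat.mod_lt k (by norm_num : 4 > 0)
  generalize k % 4 = m at h ⊢
  interval_cases m <;> decide

theorem degree_two_formula_mod_four_general {α : Type}
    (a : α)
    (r : ℕ) (i j : Fin r) (hij : i < j)
    (p : NPhrase α) :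
    (letI k := bracketN (gPat r i j a) p
     2 * (bracketN (ePat r i j a a) p + bracketN (fPat r i j a a) p) = k * (k - 1) ∧
     ((2 * bracketN (ePat r i j a a) p + 2 * bracketN (fPat r i j a a) p + k : ℕ) : ZMod 4)
        = (k : ZMod 4) ^ 2 ∧
     ((2 * bracketN (ePat r i j a a) p + 2 * bracketN (fPat r i j a a) p + k : ℕ) : ZMod 4)
        = if k % 2 = 1 then 1 else 0) := by
  have hef := bracketN_ePat_add_bracketN_fPat hij.ne a p
  rw [bracketN_gPat hij.ne]
  generalize (gLetters r i j a p).card = k at hef ⊢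
  have h2 : 2 * (bracketN (ePat r i j a a) p + bracketN (fPat r i j a a) p) = k * (k - 1) := by
    rw [hef, Nat.two_mul_choose_two]
  have hsq : 2 * bracketN (ePat r i j a a) p + 2 * bracketN (fPat r i j a a) p + k = k ^ 2 := by
    rw [← mul_add, h2]
    cases k <;> simp [sq, Nat.mul_succ]
  refine ⟨h2, ?_, ?_⟩ <;> rw [hsq, Nat.cast_pow]
  exact ZMod.natCast_sq_mod_four k

/-- fix an involution τ and `a ∈ α` with `a = τ(a)`.  For an
`r`-component nanophrase `p` and components `i < j`, writing
`k = ⟨g_{i,j,a}, p⟩`, one has `⟨2e_{i,j,a,a} + 2f_{i,j,a,a}, p⟩ = k(k−1)`, hence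
`⟨2e + 2f + g, p⟩ ≡ k² (mod 4)`; in particular this degree-2 formula mod 4 equals
1 if `k` is odd and 0 if `k` is even, recovering the mod-2 linking number entry
`l_{ija}(p) = k mod 2`. -/
theorem degree_two_formula_mod_four {α : Type}
    (τ : α → α) (hτ : Function.Involutive τ) (a : α) (ha : a = τ a)
    (r : ℕ) (i j : Fin r) (hij : i < j)
    (p : NPhrase α) (hp : IsNano p) (hpr : comps p = r) :
    (letI k := bracketN (gPat r i j a) p
     2 * (bracketN (ePat r i j a a) p + bracketN (fPat r i j a a) p) = k * (k - 1) ∧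
     ((2 * bracketN (ePat r i j a a) p + 2 * bracketN (fPat r i j a a) p + k : ℕ) : ZMod 4)
        = (k : ZMod 4) ^ 2 ∧
     ((2 * bracketN (ePat r i j a a) p + 2 * bracketN (fPat r i j a a) p + k : ℕ) : ZMod 4)
        = if k % 2 = 1 then 1 else 0) :=
  degree_two_formula_mod_four_general a r i j hij p
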